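/- Let θ > 8r > 0, a > 0, and for γ, κ ≥ 0 define Δ(α) = ρ + θ/4 - (1/4)√(a⁻¹(θ-8r)(4α²+θa)), Θ(β,κ) = κ²/4 + √(θ(θ-8r)(a²κ⁴+4aθβ²))/(4aθ), and Δ(γ,κ) = ρ + (θ-κ²)/4 - (1/(4θa))√(θ(θ-8r)(4aθγ²+a²(θ+κ²)²)). Then sup{Δ(α) - Θ(β,κ) : α, β > 0, α + β = γ} = Δ(γ,κ), attained at ᾱ = γθ/(θ+κ²) and β̄ = γκ²/(θ+κ²). -/

import Mathlib

noncomputable def DeltaFn (θ r a ρ α : ℝ) : ℝ :=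
  ρ + θ/4 - (1/4) * Real.sqrt (a⁻¹ * (θ - 8*r) * (4*α^2 + θ*a))
noncomputable def ThetaFn (θ r a β κ : ℝ) : ℝ :=
  κ^2/4 + Real.sqrt (θ*(θ - 8*r)*(a^2*κ^4 + 4*a*θ*β^2))/(4*a*θ)
noncomputable def DeltaFn2 (θ r a ρ γ κ : ℝ) : ℝ :=
  ρ + (θ - κ^2)/4 - (1/(4*θ*a)) * Real.sqrt (θ*(θ - 8*r)*(4*a*θ*γ^2 + a^2*(θ + κ^2)^2))

lemma sqrt_sq_mul' (p x : ℝ) (hp : 0 ≤ p) :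
    Real.sqrt (p^2 * x) = p * Real.sqrt x := by
  rw [Real.sqrt_mul (sq_nonneg p), Real.sqrt_sq hp]

lemma mink (x₁ y₁ x₂ y₂ : ℝ) :
    Real.sqrt ((x₁+x₂)^2+(y₁+y₂)^2) ≤
      Real.sqrt (x₁^2+y₁^2) + Real.sqrt (x₂^2+y₂^2) := by
  have hA := Real.sq_sqrt (add_nonneg (sq_nonneg x₁) (sq_nonneg y₁))
  have hB := Real.sq_sqrt (add_nonneg (sq_nonneg x₂) (sq_nonneg y₂))
  set A := Real.sqrt (x₁^2+y₁^2) with hAdef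
  set B := Real.sqrt (x₂^2+y₂^2) with hBdef
  have hA0 : 0 ≤ A := Real.sqrt_nonneg _
  have hB0 : 0 ≤ B := Real.sqrt_nonneg _
  have hprod : A^2 * B^2 = (x₁^2+y₁^2) * (x₂^2+y₂^2) := by rw [hA, hB]
  have h1 : (x₁*x₂ + y₁*y₂)^2 ≤ (A*B)^2 := by nlinarith [sq_nonneg (x₁*y₂ - x₂*y₁)]
  have hAB : x₁*x₂ + y₁*y₂ ≤ A*B := by nlinarith [mul_nonneg hA0 hB0]
  calc Real.sqrt ((x₁+x₂)^2+(y₁+y₂)^2)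
      ≤ Real.sqrt ((A+B)^2) := Real.sqrt_le_sqrt (by nlinarith)
    _ = A + B := Real.sqrt_sq (by linarith)

theorem stmt6 (θ r a ρ : ℝ) (hr : 0 < r) (hθ : 8*r < θ) (ha : 0 < a) (hρ : 0 ≤ ρ)
    (γ κ : ℝ) (hγ : 0 < γ) (hκ : 0 < κ) :
    IsGreatest
      {v : ℝ | ∃ α β : ℝ, 0 < α ∧ 0 < β ∧ α + β = γ ∧
        v = DeltaFn θ r a ρ α - ThetaFn θ r a β κ}
      (DeltaFn2 θ r a ρ γ κ) ∧
    DeltaFn θ r a ρ (γ*θ/(θ + κ^2)) - ThetaFn θ r a (γ*κ^2/(θ + κ^2)) κ =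
      DeltaFn2 θ r a ρ γ κ := by
  have hθ0 : 0 < θ := by linarith
  have hc : 0 < θ*(θ - 8*r) := by nlinarith
  have haθ : 0 < a*θ := mul_pos ha hθ0
  have hκθ : 0 < θ + κ^2 := by positivity
  -- rewrite DeltaFn in the common form
  have hD : ∀ α : ℝ, DeltaFn θ r a ρ α
      = ρ + θ/4 - Real.sqrt (θ*(θ - 8*r)*(4*a*θ*α^2 + a^2*θ^2))/(4*a*θ) := by
    intro α
    unfold DeltaFn
    have h1 : θ*(θ - 8*r)*(4*a*θ*α^2 + a^2*θ^2)
        = (a*θ)^2 * (a⁻¹ * (θ - 8*r) * (4*α^2 + θ*a)) := by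
      field_simp
    rw [h1, sqrt_sq_mul' _ _ haθ.le]
    field_simp
  have hT0 : 0 ≤ Real.sqrt (θ*(θ - 8*r)*(4*a*θ*γ^2 + a^2*(θ + κ^2)^2)) :=
    Real.sqrt_nonneg _
  -- equality at the claimed maximizer
  have hEq : DeltaFn θ r a ρ (γ*θ/(θ + κ^2)) - ThetaFn θ r a (γ*κ^2/(θ + κ^2)) κ =
      DeltaFn2 θ r a ρ γ κ := by
    rw [hD]
    unfold ThetaFn DeltaFn2
    have h1 : θ*(θ - 8*r)*(4*a*θ*(γ*θ/(θ + κ^2))^2 + a^2*θ^2)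
        = (θ/(θ + κ^2))^2 * (θ*(θ - 8*r)*(4*a*θ*γ^2 + a^2*(θ + κ^2)^2)) := by
      field_simp
    have h2 : θ*(θ - 8*r)*(a^2*κ^4 + 4*a*θ*(γ*κ^2/(θ + κ^2))^2)
        = (κ^2/(θ + κ^2))^2 * (θ*(θ - 8*r)*(4*a*θ*γ^2 + a^2*(θ + κ^2)^2)) := by
      field_simp; ring
    rw [h1, h2, sqrt_sq_mul' _ _ (by positivity), sqrt_sq_mul' _ _ (by positivity)]
    set S := Real.sqrt (θ*(θ - 8*r)*(4*a*θ*γ^2 + a^2*(θ + κ^2)^2)) with hS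
    field_simp
    ring
  refine ⟨⟨⟨γ*θ/(θ + κ^2), γ*κ^2/(θ + κ^2), by positivity, by positivity, ?_, hEq.symm⟩, ?_⟩, hEq⟩
  · field_simp
  · rintro v ⟨α, β, hα, hβ, hαβ, rfl⟩
    rw [hD]
    unfold ThetaFn DeltaFn2
    obtain ⟨s, hs0, hs⟩ : ∃ s : ℝ, 0 ≤ s ∧ s^2 = a*θ :=
      ⟨Real.sqrt (a*θ), Real.sqrt_nonneg _, Real.sq_sqrt haθ.le⟩
    have e1 : θ*(θ - 8*r)*(4*a*θ*α^2 + a^2*θ^2)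
        = (θ*(θ - 8*r))*((2*s*α)^2 + (a*θ)^2) := by
      linear_combination (-4*θ*(θ - 8*r)*α^2) * hs
    have e2 : θ*(θ - 8*r)*(a^2*κ^4 + 4*a*θ*β^2)
        = (θ*(θ - 8*r))*((2*s*β)^2 + (a*κ^2)^2) := by
      linear_combination (-4*θ*(θ - 8*r)*β^2) * hs
    have eT : θ*(θ - 8*r)*(4*a*θ*γ^2 + a^2*(θ + κ^2)^2)
        = (θ*(θ - 8*r))*((2*s*α + 2*s*β)^2 + (a*θ + a*κ^2)^2) := by
      rw [← hαβ]; linear_combination (-4*θ*(θ - 8*r)*(α+β)^2) * hs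
    have hsum : Real.sqrt (θ*(θ - 8*r)*(4*a*θ*γ^2 + a^2*(θ + κ^2)^2))
        ≤ Real.sqrt (θ*(θ - 8*r)*(4*a*θ*α^2 + a^2*θ^2))
          + Real.sqrt (θ*(θ - 8*r)*(a^2*κ^4 + 4*a*θ*β^2)) := by
      rw [e1, e2, eT, Real.sqrt_mul hc.le, Real.sqrt_mul hc.le, Real.sqrt_mul hc.le]
      have h := mul_le_mul_of_nonneg_left (mink (2*s*α) (a*θ) (2*s*β) (a*κ^2))
        (Real.sqrt_nonneg (θ*(θ - 8*r)))
      rw [mul_add] at h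
      exact h
    have h4 : (0:ℝ) < 4*a*θ := by positivity
    have hdiv : Real.sqrt (θ*(θ - 8*r)*(4*a*θ*γ^2 + a^2*(θ + κ^2)^2)) / (4*a*θ)
        ≤ (Real.sqrt (θ*(θ - 8*r)*(4*a*θ*α^2 + a^2*θ^2))
          + Real.sqrt (θ*(θ - 8*r)*(a^2*κ^4 + 4*a*θ*β^2))) / (4*a*θ) := by
      gcongr
    rw [add_div] at hdiv
    have heq1 : (1/(4*θ*a)) * Real.sqrt (θ*(θ - 8*r)*(4*a*θ*γ^2 + a^2*(θ + κ^2)^2))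
        = Real.sqrt (θ*(θ - 8*r)*(4*a*θ*γ^2 + a^2*(θ + κ^2)^2)) / (4*a*θ) := by ring
    rw [heq1]
    linarith
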